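/- The class of quasi-Borel subsets of C^ω is closed under the dummy-insertion map ι: if W ⊆ C^ω is quasi-Borel, then ι(W) is quasi-Borel. Consequently (given quasi-Borel determinacy of Gale–Stewart games ⟨C, W⟩), every game ⟨C, D, W'⟩ with quasi-Borel W' and arbitrary D ⊆ C* is determined. -/

import Mathlib

variable {C A O : Type*}

/-- The prefix of length `n` of an infinite play. -/
def pref (p : ℕ → C) (n : ℕ) : List C := List.ofFn (fun i : Fin n => p (i : ℕ))

/-- Plays compatible with a partial strategy profile. -/
def Plays (s : List C → Option C) : Set (ℕ → C) :=
  {p | ∀ (n : ℕ) (c : C), s (pref p n) = some c → p n = c}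

/-- The history of length n induced by a total strategy profile. -/
def hist (t : List C → C) : ℕ → List C
  | 0 => []
  | n + 1 => hist t n ++ [t (hist t n)]

/-- The play induced by a total strategy profile: p(t)_n = t(p(t)_{<n}). -/
def play (t : List C → C) (n : ℕ) : C := t (hist t n)

open Classical in
/-- Restriction of a partial strategy profile to a set of histories. -/
noncomputable def restr (s : List C → Option C) (X : Set (List C)) (γ : List C) : Option C :=
  if γ ∈ X then s γ else none

/-- Restriction of a total strategy profile to a set of histories (as a partial one). -/
noncomputable def restrT (s : List C → C) (X : Set (List C)) : List C → Option C :=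
  restr (fun γ => some (s γ)) X

/-- γC^* : finite sequences extending γ. -/
def ext (γ : List C) : Set (List C) := {δ | γ <+: δ}

/-- γC^ω : infinite sequences extending γ. -/
def extω (γ : List C) : Set (ℕ → C) := {p | pref p γ.length = γ}


/-- A <ₐ-terminal interval. -/
def Terminal (lt : O → O → Prop) (I : Set O) : Prop := ∀ x y, lt x y → x ∈ I → y ∈ I

/-- The guarantee g_a(γ, s) of agent a at node γ under strategy profile s. -/
noncomputable def guar (d : List C → A) (v : (ℕ → C) → O) (lt : A → O → O → Prop)
    (a : A) (γ : List C) (s : List C → C) : Set O :=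
  {o | ∃ p ∈ Plays (restrT s {δ | δ ∈ ext γ ∧ d δ = a}) ∩ extω γ, lt a (v p) o ∨ v p = o}

/-- The best guarantee G_a(γ). -/
noncomputable def bestGuar (d : List C → A) (v : (ℕ → C) → O) (lt : A → O → O → Prop)
    (a : A) (γ : List C) : Set O :=
  ⋂ s : List C → C, guar d v lt a γ s

/-- Nash equilibrium of an infinite sequential game. -/
def NashEq (d : List C → A) (v : (ℕ → C) → O) (prec : A → O → O → Prop)
    (s : List C → C) : Prop :=
  ∀ (a : A) (s' : List C → C), (∀ γ, d γ ≠ a → s' γ = s γ) →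
    ¬ prec a (v (play s)) (v (play s'))

/-- Winning strategy for agent a (owning D) in ⟨C, D, W⟩. -/
def WinA (D : Set (List C)) (W : Set (ℕ → C)) (sa : List C → C) : Prop :=
  ∀ t : List C → C, (∀ γ ∈ D, t γ = sa γ) → play t ∈ W

/-- Winning strategy for agent b (owning C^* \ D) in ⟨C, D, W⟩. -/
def WinB (D : Set (List C)) (W : Set (ℕ → C)) (sb : List C → C) : Prop :=
  ∀ t : List C → C, (∀ γ ∉ D, t γ = sb γ) → play t ∉ W

/-- Determinacy of the two-agent win-lose game ⟨C, D, W⟩. -/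
def Determined (D : Set (List C)) (W : Set (ℕ → C)) : Prop :=
  (∃ sa, WinA D W sa) ∨ (∃ sb, WinB D W sb)


universe u

/-- Quasi-Borel sets of a topological space (Martin 1990). -/
inductive QuasiBorel {X : Type u} [TopologicalSpace X] : Set X → Prop
  | isOpen : ∀ U : Set X, IsOpen U → QuasiBorel U
  | compl : ∀ A : Set X, QuasiBorel A → QuasiBorel Aᶜ
  | iUnion : ∀ f : ℕ → Set X, (∀ n, QuasiBorel (f n)) → QuasiBorel (⋃ n, f n)
  | sepUnion : ∀ (J : Type u) (B D : J → Set X),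
      (∀ j, QuasiBorel (B j)) → (∀ j, IsOpen (D j)) →
      (∀ i j, i ≠ j → Disjoint (D i) (D j)) → (∀ j, B j ⊆ D j) →
      QuasiBorel (⋃ j, B j)

/-- The product of the discrete topology on C^ω. -/
def seqTop (C : Type u) : TopologicalSpace (ℕ → C) :=
  @Pi.topologicalSpace ℕ (fun _ => C) (fun _ => ⊥)

/-- Quasi-Borel subsets of C^ω with the product of the discrete topology. -/
def QB {C : Type u} (W : Set (ℕ → C)) : Prop :=
  @QuasiBorel (ℕ → C) (seqTop C) W

variable {C : Type u}

open Classical in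
/-- Dummy-insertion on finite sequences, processing from prefix `pre`. -/
noncomputable def iotaFrom (D : Set (List C)) (c0 : C) : List C → List C → List C
  | _, [] => []
  | pre, c :: rest =>
      (if ((pre ∈ D) ↔ (pre ++ [c] ∈ D)) then [c, c0] else [c]) ++
        iotaFrom D c0 (pre ++ [c]) rest

/-- Dummy-insertion map ι on finite sequences. -/
noncomputable def iota (D : Set (List C)) (c0 : C) (γ : List C) : List C :=
  iotaFrom D c0 [] γ

/-- Dummy-insertion map ι on infinite sequences: ι(α)_n is the n-th entry of
ι applied to a long enough prefix of α. -/
noncomputable def iotaSeq (D : Set (List C)) (c0 : C) (α : ℕ → C) (n : ℕ) : C :=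
  (iota D c0 (List.ofFn (fun i : Fin (n + 1) => α (i : ℕ)))).getD n c0

/-!
`ι` inserts the dummy move `c0` after every move that leaves the turn with the same agent, so that
turns alternate and, when `[] ∈ D`, `ι(γ)` has even length exactly when `γ ∈ D`. On plays, `ι` is
injective, its range is the closed set of plays that never skip a dummy move, and it maps a cylinder
`γC^ω` onto `ι(γ)C^ω ∩ range ι`; since finite sequences are prefix-comparable iff their `ι`-images
are, disjoint open sets stay inside disjoint open sets, and induction on quasi-Borel sets shows that
`ι(W)` is quasi-Borel.

For determinacy, play the Gale–Stewart game on the range of `ι`, in which skipping a dummy move loses.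
A profile `t` of `⟨C, D, W'⟩` is simulated by the profile that plays `t` at `ι(γ)`, the winning
strategy elsewhere on the winner's nodes and `c0` elsewhere on the loser's nodes; its play is
`ι(play t)`, so `σ ∘ ι` wins the original game. If `[] ∉ D`, swap the agents and complement `W'`.
-/

section Prefixes

lemma pref_length (p : ℕ → C) (n : ℕ) : (pref p n).length = n := List.length_ofFn

lemma pref_getElem (p : ℕ → C) {n i : ℕ} (h : i < (pref p n).length) : (pref p n)[i] = p i :=
  List.getElem_ofFn h

lemma pref_succ (p : ℕ → C) (n : ℕ) : pref p (n + 1) = pref p n ++ [p n] := by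
  rw [pref, pref, List.ofFn_succ', List.concat_eq_append]
  rfl

lemma mem_extω_iff {p : ℕ → C} {γ : List C} :
    p ∈ extω γ ↔ ∀ (i : ℕ) (h : i < γ.length), p i = γ[i] := by
  refine ⟨fun h i hi => ?_, fun h => List.ext_getElem (pref_length p _) fun i _ hi => ?_⟩
  · rw [← List.getElem_of_eq h (by rwa [pref_length]), pref_getElem]
  · rw [pref_getElem, h i hi]

lemma extω_pref_eq_cylinder (p : ℕ → C) (n : ℕ) : extω (pref p n) = PiNat.cylinder p n := by
  ext q
  simp [mem_extω_iff, PiNat.mem_cylinder_iff, pref_length, pref_getElem]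

lemma extω_anti {γ δ : List C} (h : γ <+: δ) : extω δ ⊆ extω γ := fun p hp =>
  mem_extω_iff.2 fun i hi => by rw [mem_extω_iff.1 hp i (hi.trans_le h.length_le), h.getElem]

lemma mem_extω_append_singleton {p : ℕ → C} {γ : List C} {c : C} :
    p ∈ extω (γ ++ [c]) ↔ p ∈ extω γ ∧ p γ.length = c := by
  simp only [extω, Set.mem_ofPred, List.length_append, List.length_singleton, pref_succ]
  constructor
  · intro h
    obtain ⟨h1, h2⟩ := List.append_inj h (pref_length p _)
    exact ⟨h1, List.singleton_inj.1 h2⟩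
  · rintro ⟨h1, rfl⟩
    rw [h1]

lemma pref_prefix_pref (p : ℕ → C) {m n : ℕ} (h : m ≤ n) : pref p m <+: pref p n := by
  induction n, h using Nat.le_induction with
  | base => exact List.prefix_refl _
  | succ n _ ih => exact ih.trans (pref_succ p n ▸ List.prefix_append _ _)

lemma prefix_or_prefix_of_mem_extω {p : ℕ → C} {γ δ : List C} (hγ : p ∈ extω γ)
    (hδ : p ∈ extω δ) : γ <+: δ ∨ δ <+: γ := by
  rw [extω, Set.mem_ofPred] at hγ hδ
  rcases le_total γ.length δ.length with h | h
  · exact .inl (hγ ▸ hδ ▸ pref_prefix_pref p h)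
  · exact .inr (hγ ▸ hδ ▸ pref_prefix_pref p h)

lemma extω_nonempty (c0 : C) (γ : List C) : (extω γ).Nonempty :=
  ⟨fun n => γ.getD n c0, mem_extω_iff.2 fun _ hi => List.getD_eq_getElem _ _ hi⟩

lemma hist_length (t : List C → C) (n : ℕ) : (hist t n).length = n := by
  induction n <;> simp [hist, *]

lemma hist_eq_pref_play (t : List C → C) (n : ℕ) : hist t n = pref (play t) n := by
  induction n with
  | zero => rfl
  | succ n ih => rw [pref_succ, ← ih]; rfl

lemma play_length_of_mem_extω {t : List C → C} {δ : List C} (h : play t ∈ extω δ) :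
    play t δ.length = t δ := by
  rw [play, hist_eq_pref_play, h]

lemma play_comp_length (p : ℕ → C) : play (fun δ => p δ.length) = p :=
  funext fun n => congrArg p (hist_length _ n)

end Prefixes

section FiniteIota

variable {D : Set (List C)} {c0 : C}

lemma iotaFrom_append (pre l m : List C) :
    iotaFrom D c0 pre (l ++ m) = iotaFrom D c0 pre l ++ iotaFrom D c0 (pre ++ l) m := by
  induction l generalizing pre with
  | nil => simp [iotaFrom]
  | cons c l ih => simp [iotaFrom, ih]

lemma iota_append_singleton_of_iff {γ : List C} {c : C} (h : γ ∈ D ↔ γ ++ [c] ∈ D) :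
    iota D c0 (γ ++ [c]) = iota D c0 γ ++ [c, c0] := by
  simp [iota, iotaFrom_append, iotaFrom, h]

lemma iota_append_singleton_of_not_iff {γ : List C} {c : C} (h : ¬(γ ∈ D ↔ γ ++ [c] ∈ D)) :
    iota D c0 (γ ++ [c]) = iota D c0 γ ++ [c] := by
  simp [iota, iotaFrom_append, iotaFrom, h]

lemma iota_append_singleton_prefix (γ : List C) (c : C) :
    iota D c0 γ ++ [c] <+: iota D c0 (γ ++ [c]) := by
  by_cases h : γ ∈ D ↔ γ ++ [c] ∈ D
  · rw [iota_append_singleton_of_iff h]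
    exact ⟨[c0], by simp⟩
  · rw [iota_append_singleton_of_not_iff h]

lemma iota_mono {γ δ : List C} (h : γ <+: δ) : iota D c0 γ <+: iota D c0 δ := by
  obtain ⟨r, rfl⟩ := h
  rw [iota, iota, iotaFrom_append]
  exact List.prefix_append _ _

lemma length_le_length_iota (γ : List C) : γ.length ≤ (iota D c0 γ).length := by
  induction γ using List.reverseRecOn with
  | nil => simp
  | append_singleton γ c ih =>
    simpa using ih.trans_lt (by simpa using (iota_append_singleton_prefix γ c).length_le)

lemma append_singleton_prefix_of_iota_prefix {γ δ : List C} {c : C} (hγ : γ <+: δ)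
    (h : iota D c0 γ ++ [c] <+: iota D c0 δ) : γ ++ [c] <+: δ := by
  obtain ⟨_ | ⟨d, r⟩, rfl⟩ := hγ
  · simpa using h.length_le
  · have hd : iota D c0 γ ++ [d] <+: iota D c0 (γ ++ d :: r) :=
      (iota_append_singleton_prefix γ d).trans (iota_mono ⟨r, by simp⟩)
    obtain rfl : c = d := by
      simpa using List.prefix_of_prefix_length_le h hd (by simp)
    exact ⟨r, by simp⟩

lemma prefix_of_iota_prefix {γ δ : List C} (h : iota D c0 γ <+: iota D c0 δ) : γ <+: δ := by
  induction γ using List.reverseRecOn with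
  | nil => exact List.nil_prefix
  | append_singleton γ c ih =>
    have hγ : iota D c0 γ <+: iota D c0 (γ ++ [c]) := iota_mono (List.prefix_append _ _)
    exact append_singleton_prefix_of_iota_prefix (ih (hγ.trans h))
      ((iota_append_singleton_prefix γ c).trans h)

lemma iota_injective : Function.Injective (iota D c0) := fun γ δ h => by
  have hγδ : γ <+: δ := prefix_of_iota_prefix (c0 := c0) (D := D) (by rw [h])
  have hδγ : δ <+: γ := prefix_of_iota_prefix (c0 := c0) (D := D) (by rw [h])
  exact hγδ.eq_of_length (hγδ.length_le.antisymm hδγ.length_le)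

lemma iota_ne_iota_append_singleton {γ : List C} {c : C} (h : γ ∈ D ↔ γ ++ [c] ∈ D)
    (δ : List C) : iota D c0 δ ≠ iota D c0 γ ++ [c] := by
  intro hδ
  have hγδ : γ ++ [c] <+: δ := append_singleton_prefix_of_iota_prefix
    (prefix_of_iota_prefix (hδ ▸ List.prefix_append (iota D c0 γ) [c]))
    (by rw [hδ])
  have := (iota_mono (D := D) (c0 := c0) hγδ).length_le
  rw [hδ, iota_append_singleton_of_iff h] at this
  simp at this

lemma even_length_iota_iff (hD : [] ∈ D) (γ : List C) : Even (iota D c0 γ).length ↔ γ ∈ D := by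
  induction γ using List.reverseRecOn with
  | nil => simpa [iota, iotaFrom] using hD
  | append_singleton γ c ih =>
    by_cases h : γ ∈ D ↔ γ ++ [c] ∈ D
    · simp [iota_append_singleton_of_iff h, Nat.even_add, ih, h]
    · simp only [iota_append_singleton_of_not_iff h, List.length_append, List.length_singleton,
        Nat.even_add_one, ih]
      tauto

end FiniteIota

section Deviations

def dummyNodes (D : Set (List C)) (c0 : C) : Set (List C) :=
  {δ | ∃ γ c, (γ ∈ D ↔ γ ++ [c] ∈ D) ∧ δ = iota D c0 γ ++ [c]}

def deviations (c0 : C) (N : Set (List C)) : Set (ℕ → C) :=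
  {p | ∃ δ ∈ N, p ∈ extω δ ∧ p δ.length ≠ c0}

variable {D : Set (List C)} {c0 : C}

lemma play_notMem_deviations {N : Set (List C)} {T : List C → C} (h : ∀ δ ∈ N, T δ = c0) :
    play T ∉ deviations c0 N := by
  rintro ⟨δ, hδ, hp, hne⟩
  exact hne (by rw [play_length_of_mem_extω hp, h δ hδ])

lemma play_mem_extω_iota_hist {T t : List C → C} (hT : ∀ γ, T (iota D c0 γ) = t γ)
    (hdev : play T ∉ deviations c0 (dummyNodes D c0)) (n : ℕ) :
    play T ∈ extω (iota D c0 (hist t n)) := by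
  induction n with
  | zero => simp [hist, iota, iotaFrom, extω, pref]
  | succ n ih =>
    set c := t (hist t n)
    have hnext : play T ∈ extω (iota D c0 (hist t n) ++ [c]) :=
      mem_extω_append_singleton.2 ⟨ih, by rw [play_length_of_mem_extω ih, hT]⟩
    change play T ∈ extω (iota D c0 (hist t n ++ [c]))
    by_cases h : hist t n ∈ D ↔ hist t n ++ [c] ∈ D
    · rw [iota_append_singleton_of_iff h, show [c, c0] = [c] ++ [c0] from rfl,
        ← List.append_assoc, mem_extω_append_singleton]
      exact ⟨hnext, not_not.1 fun hne => hdev ⟨_, ⟨_, _, h, rfl⟩, hnext, hne⟩⟩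
    · rwa [iota_append_singleton_of_not_iff h]

lemma eq_iotaSeq_of_forall_mem_extω {p α : ℕ → C}
    (h : ∀ n, p ∈ extω (iota D c0 (pref α n))) : p = iotaSeq D c0 α := by
  funext k
  have hk : k < (iota D c0 (pref α (k + 1))).length := by
    simpa [pref_length] using (length_le_length_iota (D := D) (c0 := c0) (pref α (k + 1)))
  rw [mem_extω_iff.1 (h (k + 1)) k hk, iotaSeq]
  exact (List.getD_eq_getElem _ _ hk).symm

lemma play_eq_iotaSeq {T t : List C → C} (hT : ∀ γ, T (iota D c0 γ) = t γ)
    (hdev : play T ∉ deviations c0 (dummyNodes D c0)) : play T = iotaSeq D c0 (play t) :=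
  eq_iotaSeq_of_forall_mem_extω fun n =>
    hist_eq_pref_play t n ▸ play_mem_extω_iota_hist hT hdev n

open Classical in
noncomputable def transfer (D : Set (List C)) (c0 : C) (t σ : List C → C) (P : Set (List C)) :
    List C → C :=
  Function.extend (iota D c0) t fun δ => if δ ∈ P then σ δ else c0

variable {t σ : List C → C} {P : Set (List C)}

lemma transfer_iota (γ : List C) : transfer D c0 t σ P (iota D c0 γ) = t γ :=
  iota_injective.extend_apply _ _ γ

lemma transfer_eq_of_mem (ht : ∀ γ, iota D c0 γ ∈ P → t γ = σ (iota D c0 γ)) {δ : List C}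
    (hδ : δ ∈ P) : transfer D c0 t σ P δ = σ δ := by
  by_cases h : ∃ γ, iota D c0 γ = δ
  · obtain ⟨γ, rfl⟩ := h
    rw [transfer_iota, ht γ hδ]
  · rw [transfer, Function.extend_apply' _ _ _ h, if_pos hδ]

lemma play_transfer_notMem_deviations :
    play (transfer D c0 t σ P) ∉ deviations c0 (dummyNodes D c0 \ P) := by
  refine play_notMem_deviations fun δ ⟨⟨γ, c, h, hδ⟩, hP⟩ => ?_
  have hδ' : ¬∃ γ', iota D c0 γ' = δ := fun ⟨γ', h'⟩ =>
    iota_ne_iota_append_singleton h γ' (h'.trans hδ)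
  rw [transfer, Function.extend_apply' _ _ _ hδ', if_neg hP]

lemma play_transfer_empty_notMem_deviations :
    play (transfer D c0 t σ ∅) ∉ deviations c0 (dummyNodes D c0) := by
  simpa using play_transfer_notMem_deviations (D := D) (c0 := c0) (t := t) (σ := σ) (P := ∅)

lemma iotaSeq_eq_play_transfer (α : ℕ → C) :
    iotaSeq D c0 α = play (transfer D c0 (fun γ => α γ.length) σ ∅) := by
  rw [play_eq_iotaSeq (fun γ => transfer_iota γ) play_transfer_empty_notMem_deviations,
    play_comp_length]

lemma iotaSeq_notMem_deviations (α : ℕ → C) :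
    iotaSeq D c0 α ∉ deviations c0 (dummyNodes D c0) := by
  rw [iotaSeq_eq_play_transfer (σ := fun _ => c0)]
  exact play_transfer_empty_notMem_deviations

lemma iotaSeq_mem_extω_iota_pref (α : ℕ → C) (n : ℕ) :
    iotaSeq D c0 α ∈ extω (iota D c0 (pref α n)) := by
  have := play_mem_extω_iota_hist (D := D) (c0 := c0) (t := fun γ => α γ.length)
    (fun γ => transfer_iota (σ := fun _ => c0) (P := ∅) γ)
    play_transfer_empty_notMem_deviations n
  rwa [hist_eq_pref_play, play_comp_length, ← iotaSeq_eq_play_transfer] at this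

lemma range_iotaSeq : Set.range (iotaSeq D c0) = (deviations c0 (dummyNodes D c0))ᶜ := by
  refine Set.Subset.antisymm (Set.range_subset_iff.2 iotaSeq_notMem_deviations) fun p hp => ?_
  have hT := play_comp_length p
  exact ⟨_, (play_eq_iotaSeq (T := fun δ => p δ.length) (fun _ => rfl) (by rwa [hT])).symm.trans hT⟩

lemma mem_extω_of_iotaSeq_mem_extω {α : ℕ → C} {γ : List C}
    (h : iotaSeq D c0 α ∈ extω (iota D c0 γ)) : α ∈ extω γ := by
  have hlen : γ.length = (pref α γ.length).length := (pref_length α _).symm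
  have : γ = pref α γ.length := by
    rcases prefix_or_prefix_of_mem_extω h (iotaSeq_mem_extω_iota_pref α γ.length) with hp | hp
    · exact (prefix_of_iota_prefix hp).eq_of_length hlen
    · exact ((prefix_of_iota_prefix hp).eq_of_length hlen.symm).symm
  exact this.symm

lemma iotaSeq_injective : Function.Injective (iotaSeq D c0) := fun α β h => by
  funext k
  have hβ : β ∈ extω (pref α (k + 1)) :=
    mem_extω_of_iotaSeq_mem_extω (h ▸ iotaSeq_mem_extω_iota_pref α (k + 1))
  rw [mem_extω_iff.1 hβ k (by simp [pref_length]), pref_getElem]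

end Deviations

namespace QuasiBorel

variable {X Y : Type u} [TopologicalSpace X] [TopologicalSpace Y]

lemma union {A B : Set X} (hA : QuasiBorel A) (hB : QuasiBorel B) : QuasiBorel (A ∪ B) := by
  have : A ∪ B = ⋃ n : ℕ, if n = 0 then A else B := by
    ext x
    simp only [Set.mem_union, Set.mem_iUnion]
    refine ⟨fun h => h.elim (fun hA => ⟨0, by simpa⟩) (fun hB => ⟨1, by simpa⟩), fun ⟨n, hn⟩ => ?_⟩
    split_ifs at hn <;> simp [hn]
  rw [this]
  exact iUnion _ fun n => by split_ifs <;> assumption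

lemma inter {A B : Set X} (hA : QuasiBorel A) (hB : QuasiBorel B) : QuasiBorel (A ∩ B) := by
  rw [← compl_compl (A ∩ B), Set.compl_inter]
  exact compl _ ((compl _ hA).union (compl _ hB))

lemma image {f : X → Y} (hf : Function.Injective f) (hrange : QuasiBorel (Set.range f))
    (V : Set X → Set Y) (hV : ∀ U, IsOpen U → IsOpen (V U))
    (himage : ∀ U, IsOpen U → f '' U = V U ∩ Set.range f)
    (hdisj : ∀ U U', IsOpen U → IsOpen U' → Disjoint U U' → Disjoint (V U) (V U'))
    {A : Set X} (hA : QuasiBorel A) : QuasiBorel (f '' A) := by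
  induction hA with
  | isOpen U hU =>
    rw [himage U hU]
    exact (isOpen _ (hV U hU)).inter hrange
  | compl A _ ih =>
    rw [Set.image_compl_eq_range_sdiff_image hf, Set.sdiff_eq]
    exact hrange.inter (compl _ ih)
  | iUnion g _ ih =>
    rw [Set.image_iUnion]
    exact iUnion _ ih
  | sepUnion J B U _ hU hUdisj hBU ih =>
    rw [Set.image_iUnion]
    refine sepUnion J _ (fun j => V (U j)) ih (fun j => hV _ (hU j))
      (fun i j hij => hdisj _ _ (hU i) (hU j) (hUdisj i j hij)) fun j => ?_
    exact (Set.image_mono (hBU j)).trans ((himage _ (hU j)).trans_subset Set.inter_subset_left)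

end QuasiBorel

section Topology

attribute [local instance] seqTop

lemma extω_eq_cylinder {p : ℕ → C} {γ : List C} (hp : p ∈ extω γ) :
    extω γ = PiNat.cylinder p γ.length := by
  rw [← extω_pref_eq_cylinder, hp]

lemma isOpen_extω (γ : List C) : IsOpen (extω γ) := by
  let _ : TopologicalSpace C := ⊥
  have _ : DiscreteTopology C := ⟨rfl⟩
  rcases (extω γ).eq_empty_or_nonempty with h | ⟨p, hp⟩
  · rw [h]
    exact isOpen_empty
  · rw [extω_eq_cylinder hp]
    exact PiNat.isOpen_cylinder (fun _ => C) p _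

lemma exists_extω_pref_subset {U : Set (ℕ → C)} (hU : IsOpen U) {p : ℕ → C} (hp : p ∈ U) :
    ∃ n, extω (pref p n) ⊆ U := by
  let _ : TopologicalSpace C := ⊥
  have _ : DiscreteTopology C := ⟨rfl⟩
  obtain ⟨_, ⟨x, n, rfl⟩, hpx, hsub⟩ :=
    (PiNat.isTopologicalBasis_cylinders fun _ => C).exists_subset_of_mem_open hp hU
  refine ⟨n, ?_⟩
  rwa [extω_pref_eq_cylinder, PiNat.mem_cylinder_iff_eq.1 hpx]

lemma isOpen_deviations (c0 : C) (N : Set (List C)) : IsOpen (deviations c0 N) :=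
  isOpen_iff_forall_mem_open.2 fun p ⟨δ, hδ, hp, hne⟩ =>
    ⟨extω (δ ++ [p δ.length]), fun q hq => by
      obtain ⟨hqδ, hq⟩ := mem_extω_append_singleton.1 hq
      exact ⟨δ, hδ, hqδ, hq ▸ hne⟩,
    isOpen_extω _, mem_extω_append_singleton.2 ⟨hp, rfl⟩⟩

def iotaCylinders (D : Set (List C)) (c0 : C) (U : Set (ℕ → C)) : Set (ℕ → C) :=
  ⋃ (γ : List C) (_ : extω γ ⊆ U), extω (iota D c0 γ)

variable {D : Set (List C)} {c0 : C}

lemma isOpen_iotaCylinders (U : Set (ℕ → C)) : IsOpen (iotaCylinders D c0 U) :=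
  isOpen_biUnion fun _ _ => isOpen_extω _

lemma image_iotaSeq_eq_iotaCylinders_inter_range {U : Set (ℕ → C)} (hU : IsOpen U) :
    iotaSeq D c0 '' U = iotaCylinders D c0 U ∩ Set.range (iotaSeq D c0) := by
  ext p
  constructor
  · rintro ⟨α, hα, rfl⟩
    obtain ⟨n, hn⟩ := exists_extω_pref_subset hU hα
    exact ⟨Set.mem_iUnion₂.2 ⟨_, hn, iotaSeq_mem_extω_iota_pref α n⟩, α, rfl⟩
  · rintro ⟨hp, α, rfl⟩
    obtain ⟨γ, hγ, hαγ⟩ := Set.mem_iUnion₂.1 hp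
    exact ⟨α, hγ (mem_extω_of_iotaSeq_mem_extω hαγ), rfl⟩

lemma disjoint_iotaCylinders {U U' : Set (ℕ → C)} (h : Disjoint U U') :
    Disjoint (iotaCylinders D c0 U) (iotaCylinders D c0 U') := by
  refine Set.disjoint_left.2 fun p hp hp' => ?_
  obtain ⟨γ, hγ, hpγ⟩ := Set.mem_iUnion₂.1 hp
  obtain ⟨δ, hδ, hpδ⟩ := Set.mem_iUnion₂.1 hp'
  rcases prefix_or_prefix_of_mem_extω hpγ hpδ with hγδ | hδγ
  · obtain ⟨q, hq⟩ := extω_nonempty c0 δ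
    exact Set.disjoint_left.1 h (hγ (extω_anti (prefix_of_iota_prefix hγδ) hq)) (hδ hq)
  · obtain ⟨q, hq⟩ := extω_nonempty c0 γ
    exact Set.disjoint_left.1 h (hγ hq) (hδ (extω_anti (prefix_of_iota_prefix hδγ) hq))

lemma qb_image_iotaSeq {W : Set (ℕ → C)} (hW : QB W) : QB (iotaSeq D c0 '' W) := by
  have hrange : QB (Set.range (iotaSeq D c0)) := by
    rw [range_iotaSeq]
    exact QuasiBorel.compl _ (QuasiBorel.isOpen _ (isOpen_deviations c0 _))
  exact QuasiBorel.image iotaSeq_injective hrange (iotaCylinders D c0)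
    (fun U _ => isOpen_iotaCylinders U) (fun _ hU => image_iotaSeq_eq_iotaCylinders_inter_range hU)
    (fun _ _ _ _ h => disjoint_iotaCylinders h) hW

end Topology

section Games

attribute [local instance] seqTop

variable {D : Set (List C)} {W : Set (ℕ → C)}

lemma Determined.of_compl (h : Determined Dᶜ Wᶜ) : Determined D W := by
  rcases h with ⟨s, hs⟩ | ⟨s, hs⟩
  · exact .inr ⟨s, fun t ht => hs t ht⟩
  · exact .inl ⟨s, fun t ht => not_not.1 (hs t fun γ hγ => ht γ (not_not.1 hγ))⟩

variable {c0 : C}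

/-- In the Gale–Stewart game simulating `⟨C, D, W⟩`, agent a wins on `ι(W)` and whenever agent b
skips a dummy move; when agent a skips one, the play leaves the range of `ι` and a loses. -/
def galeStewartSet (D : Set (List C)) (c0 : C) (W : Set (ℕ → C)) : Set (ℕ → C) :=
  iotaSeq D c0 '' W ∪ deviations c0 (dummyNodes D c0 \ {γ | Even γ.length})

lemma QB.compl (hW : QB W) : QB Wᶜ :=
  QuasiBorel.compl _ hW

lemma qb_galeStewartSet (hW : QB W) : QB (galeStewartSet D c0 W) :=
  (qb_image_iotaSeq hW).union (.isOpen _ (isOpen_deviations c0 _))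

lemma winA_of_winA_galeStewartSet (hD : [] ∈ D) {σ : List C → C}
    (hσ : WinA {γ | Even γ.length} (galeStewartSet D c0 W) σ) : WinA D W (σ ∘ iota D c0) := by
  intro t ht
  have hT : play (transfer D c0 t σ {γ | Even γ.length}) ∈ galeStewartSet D c0 W :=
    hσ _ fun δ hδ => transfer_eq_of_mem (fun γ hγ => ht γ ((even_length_iota_iff hD γ).1 hγ)) hδ
  rcases hT with ⟨α, hα, hαT⟩ | hdev
  · have hdev := hαT ▸ iotaSeq_notMem_deviations α
    rw [play_eq_iotaSeq transfer_iota hdev] at hαT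
    exact iotaSeq_injective hαT ▸ hα
  · exact absurd hdev play_transfer_notMem_deviations

lemma winB_of_winB_galeStewartSet (hD : [] ∈ D) {σ : List C → C}
    (hσ : WinB {γ | Even γ.length} (galeStewartSet D c0 W) σ) : WinB D W (σ ∘ iota D c0) := by
  intro t ht hW
  have hT : play (transfer D c0 t σ {γ | Even γ.length}ᶜ) ∉ galeStewartSet D c0 W :=
    hσ _ fun δ hδ => transfer_eq_of_mem
      (fun γ hγ => ht γ (mt (even_length_iota_iff hD γ).2 hγ)) hδ
  have hdev : play (transfer D c0 t σ {γ | Even γ.length}ᶜ) ∉ deviations c0 (dummyNodes D c0) := by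
    rintro ⟨δ, hδ, hp, hne⟩
    by_cases he : Even δ.length
    · exact play_transfer_notMem_deviations ⟨δ, ⟨hδ, not_not.2 he⟩, hp, hne⟩
    · exact hT (.inr ⟨δ, ⟨hδ, he⟩, hp, hne⟩)
  exact hT (.inl ⟨play t, hW, (play_eq_iotaSeq transfer_iota hdev).symm⟩)

lemma Determined.of_galeStewartSet (hD : [] ∈ D)
    (h : Determined {γ | Even γ.length} (galeStewartSet D c0 W)) : Determined D W :=
  h.imp (fun ⟨_, hσ⟩ => ⟨_, winA_of_winA_galeStewartSet hD hσ⟩)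
    (fun ⟨_, hσ⟩ => ⟨_, winB_of_winB_galeStewartSet hD hσ⟩)

end Games

theorem quasiBorel_iota_and_determinacy_general {C : Type u} (c0 : C) :
    (∀ D : Set (List C), ([] : List C) ∈ D →
      ∀ W : Set (ℕ → C), QB W → QB (iotaSeq D c0 '' W)) ∧
    ((∀ W : Set (ℕ → C), QB W → Determined {γ : List C | Even γ.length} W) →
      ∀ (D : Set (List C)) (W' : Set (ℕ → C)), QB W' → Determined D W') := by
  refine ⟨fun D _ W hW => qb_image_iotaSeq hW, fun H D W hW => ?_⟩
  have determined_of_nil_mem : ∀ D : Set (List C), [] ∈ D → ∀ W, QB W → Determined D W :=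
    fun D hD W hW => (H _ (qb_galeStewartSet (c0 := c0) hW)).of_galeStewartSet hD
  by_cases hD : [] ∈ D
  · exact determined_of_nil_mem D hD W hW
  · exact (determined_of_nil_mem Dᶜ hD Wᶜ hW.compl).of_compl

/-- Quasi-Borel sets are closed under the dummy-insertion map ι;
consequently, given quasi-Borel determinacy of Gale-Stewart games, every game
⟨C, D, W'⟩ with quasi-Borel W' and arbitrary D ⊆ C* is determined. -/
theorem quasiBorel_iota_and_determinacy {C : Type u} [Nonempty C] (c0 : C) :
    (∀ D : Set (List C), ([] : List C) ∈ D →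
      ∀ W : Set (ℕ → C), QB W → QB (iotaSeq D c0 '' W)) ∧
    ((∀ W : Set (ℕ → C), QB W → Determined {γ : List C | Even γ.length} W) →
      ∀ (D : Set (List C)) (W' : Set (ℕ → C)), QB W' → Determined D W') :=
  quasiBorel_iota_and_determinacy_general c0
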